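/- If V,W are generalized vector fields on the doubled space whose components are independent of the winding coordinates x̃ᵢ (i.e. ∂̃ⁱ applied to all components vanishes), then the C-bracket [V,W]_C reduces to the Courant bracket: its vector part is the Lie bracket [X,Y] of the vector parts and its form part is L_X ω_W − L_Y ω_V − (1/2) d(ι_X ω_W − ι_Y ω_V). -/

import Mathlib

open BigOperators

noncomputable def pd {ι : Type*} [Fintype ι] [DecidableEq ι]
    (i : ι) (f : (ι → ℝ) → ℝ) (x : ι → ℝ) : ℝ :=
  fderiv ℝ f x (Pi.single i 1)

def dual {d : ℕ} : Fin d ⊕ Fin d → Fin d ⊕ Fin d := Sum.elim Sum.inr Sum.inl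

noncomputable def cBracket (d : ℕ)
    (V W : ((Fin d ⊕ Fin d) → ℝ) → (Fin d ⊕ Fin d) → ℝ)
    (x : (Fin d ⊕ Fin d) → ℝ) (P : Fin d ⊕ Fin d) : ℝ :=
  (∑ K, (V x K * pd K (fun y => W y P) x - W x K * pd K (fun y => V y P) x))
  - (1/2) * ∑ K, (V x K * pd (dual P) (fun y => W y (dual K)) x
      - W x K * pd (dual P) (fun y => V y (dual K)) x)

noncomputable def projL (d : ℕ) : ((Fin d ⊕ Fin d) → ℝ) →L[ℝ] (Fin d → ℝ) :=
  ContinuousLinearMap.pi fun i => ContinuousLinearMap.proj (Sum.inl i)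

lemma fderiv_lift {d : ℕ} (f : (Fin d → ℝ) → ℝ) (hf : Differentiable ℝ f)
    (z : (Fin d ⊕ Fin d) → ℝ) (v : (Fin d ⊕ Fin d) → ℝ) :
    fderiv ℝ (fun y => f (y ∘ Sum.inl)) z v = fderiv ℝ f (z ∘ Sum.inl) (v ∘ Sum.inl) := by
  have h : (fun y : (Fin d ⊕ Fin d) → ℝ => f (y ∘ Sum.inl)) = f ∘ (projL d) := rfl
  rw [h, fderiv_comp z (hf _) (projL d).differentiableAt, (projL d).fderiv]
  rfl

lemma pd_lift_inl {d : ℕ} (f : (Fin d → ℝ) → ℝ) (hf : Differentiable ℝ f)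
    (z : (Fin d ⊕ Fin d) → ℝ) (i : Fin d) :
    pd (Sum.inl i) (fun y => f (y ∘ Sum.inl)) z = pd i f (z ∘ Sum.inl) := by
  unfold pd
  rw [fderiv_lift f hf]
  congr 1
  funext j
  simp [Pi.single_apply, Function.comp]

lemma pd_lift_inr {d : ℕ} (f : (Fin d → ℝ) → ℝ) (hf : Differentiable ℝ f)
    (z : (Fin d ⊕ Fin d) → ℝ) (i : Fin d) :
    pd (Sum.inr i) (fun y => f (y ∘ Sum.inl)) z = 0 := by
  unfold pd
  rw [fderiv_lift f hf]
  have : (Pi.single (Sum.inr i) 1 : (Fin d ⊕ Fin d) → ℝ) ∘ Sum.inl = 0 := by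
    funext j; simp [Pi.single_apply]
  rw [this, map_zero]

lemma pd_sum_prod {d : ℕ} (X Y ξ ζ : (Fin d → ℝ) → Fin d → ℝ)
    (hX : ∀ i, Differentiable ℝ (fun x => X x i)) (hY : ∀ i, Differentiable ℝ (fun x => Y x i))
    (hξ : ∀ i, Differentiable ℝ (fun x => ξ x i)) (hζ : ∀ i, Differentiable ℝ (fun x => ζ x i))
    (i : Fin d) (x : Fin d → ℝ) :
    pd i (fun y => ∑ k, (X y k * ζ y k - Y y k * ξ y k)) x =
      ∑ k, (pd i (fun y => X y k) x * ζ x k + X x k * pd i (fun y => ζ y k) x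
        - (pd i (fun y => Y y k) x * ξ x k + Y x k * pd i (fun y => ξ y k) x)) := by
  unfold pd
  rw [fderiv_fun_sum (A := fun k y => X y k * ζ y k - Y y k * ξ y k) (fun k _ => ((((hX k x).mul (hζ k x)).sub ((hY k x).mul (hξ k x)) :
    DifferentiableAt ℝ (fun y => X y k * ζ y k - Y y k * ξ y k) x)))]
  rw [ContinuousLinearMap.sum_apply]
  refine Finset.sum_congr rfl fun k _ => ?_
  rw [fderiv_fun_sub (f := fun y => X y k * ζ y k) (g := fun y => Y y k * ξ y k) ((hX k x).mul (hζ k x) : DifferentiableAt ℝ (fun y => X y k * ζ y k) x)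
      ((hY k x).mul (hξ k x) : DifferentiableAt ℝ (fun y => Y y k * ξ y k) x),
    fderiv_fun_mul (hX k x) (hζ k x), fderiv_fun_mul (hY k x) (hξ k x)]
  simp only [ContinuousLinearMap.sub_apply, ContinuousLinearMap.add_apply,
    ContinuousLinearMap.smul_apply, smul_eq_mul]
  ring

/-- The lift of a generalized vector (X, ω) on ℝ^d (depending only on the xⁱ
coordinates) to the doubled space. -/
def liftGV (d : ℕ) (X ω : (Fin d → ℝ) → Fin d → ℝ) :
    ((Fin d ⊕ Fin d) → ℝ) → (Fin d ⊕ Fin d) → ℝ :=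
  fun z => Sum.elim (fun i => X (z ∘ Sum.inl) i) (fun i => ω (z ∘ Sum.inl) i)

/-- If the generalized vectors V = (X, ξ) and W = (Y, ζ) do not depend on the
winding coordinates, the C-bracket reduces to the Courant bracket: its vector part
is the Lie bracket [X,Y] and its form part is L_X ζ − L_Y ξ − (1/2) d(ι_X ζ − ι_Y ξ). -/
theorem cBracket_reduces_to_Courant (d : ℕ)
    (X Y ξ ζ : (Fin d → ℝ) → Fin d → ℝ)
    (hX : ∀ i, ContDiff ℝ (⊤ : ℕ∞) (fun x => X x i)) (hY : ∀ i, ContDiff ℝ (⊤ : ℕ∞) (fun x => Y x i))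
    (hξ : ∀ i, ContDiff ℝ (⊤ : ℕ∞) (fun x => ξ x i)) (hζ : ∀ i, ContDiff ℝ (⊤ : ℕ∞) (fun x => ζ x i)) :
    ∀ z : (Fin d ⊕ Fin d) → ℝ,
      (fun P => cBracket d (liftGV d X ξ) (liftGV d Y ζ) z P) =
      Sum.elim
        -- vector part: the Lie bracket [X,Y]
        (fun i => ∑ k, (X (z ∘ Sum.inl) k * pd k (fun y => Y y i) (z ∘ Sum.inl)
          - Y (z ∘ Sum.inl) k * pd k (fun y => X y i) (z ∘ Sum.inl)))
        -- form part: L_X ζ − L_Y ξ − (1/2) d(ι_X ζ − ι_Y ξ)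
        (fun i =>
          (∑ k, (X (z ∘ Sum.inl) k * pd k (fun y => ζ y i) (z ∘ Sum.inl)
            + pd i (fun y => X y k) (z ∘ Sum.inl) * ζ (z ∘ Sum.inl) k))
          - (∑ k, (Y (z ∘ Sum.inl) k * pd k (fun y => ξ y i) (z ∘ Sum.inl)
            + pd i (fun y => Y y k) (z ∘ Sum.inl) * ξ (z ∘ Sum.inl) k))
          - (1/2) * pd i (fun y => ∑ k, (X y k * ζ y k - Y y k * ξ y k)) (z ∘ Sum.inl)) := by
  intro z
  have hX' : ∀ i, Differentiable ℝ (fun x => X x i) := fun i => (hX i).differentiable (by simp)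
  have hY' : ∀ i, Differentiable ℝ (fun x => Y x i) := fun i => (hY i).differentiable (by simp)
  have hξ' : ∀ i, Differentiable ℝ (fun x => ξ x i) := fun i => (hξ i).differentiable (by simp)
  have hζ' : ∀ i, Differentiable ℝ (fun x => ζ x i) := fun i => (hζ i).differentiable (by simp)
  have p1 : ∀ (j k : Fin d), pd (Sum.inl j) (fun y => X (y ∘ Sum.inl) k) z
      = pd j (fun w => X w k) (z ∘ Sum.inl) := fun j k => pd_lift_inl _ (hX' k) z j
  have p2 : ∀ (j k : Fin d), pd (Sum.inl j) (fun y => Y (y ∘ Sum.inl) k) z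
      = pd j (fun w => Y w k) (z ∘ Sum.inl) := fun j k => pd_lift_inl _ (hY' k) z j
  have p3 : ∀ (j k : Fin d), pd (Sum.inl j) (fun y => ξ (y ∘ Sum.inl) k) z
      = pd j (fun w => ξ w k) (z ∘ Sum.inl) := fun j k => pd_lift_inl _ (hξ' k) z j
  have p4 : ∀ (j k : Fin d), pd (Sum.inl j) (fun y => ζ (y ∘ Sum.inl) k) z
      = pd j (fun w => ζ w k) (z ∘ Sum.inl) := fun j k => pd_lift_inl _ (hζ' k) z j
  have q1 : ∀ (j k : Fin d), pd (Sum.inr j) (fun y => X (y ∘ Sum.inl) k) z = 0 :=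
    fun j k => pd_lift_inr _ (hX' k) z j
  have q2 : ∀ (j k : Fin d), pd (Sum.inr j) (fun y => Y (y ∘ Sum.inl) k) z = 0 :=
    fun j k => pd_lift_inr _ (hY' k) z j
  have q3 : ∀ (j k : Fin d), pd (Sum.inr j) (fun y => ξ (y ∘ Sum.inl) k) z = 0 :=
    fun j k => pd_lift_inr _ (hξ' k) z j
  have q4 : ∀ (j k : Fin d), pd (Sum.inr j) (fun y => ζ (y ∘ Sum.inl) k) z = 0 :=
    fun j k => pd_lift_inr _ (hζ' k) z j
  funext P
  cases P with
  | inl i =>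
    simp only [cBracket, liftGV, dual, Sum.elim_inl, Sum.elim_inr, Fintype.sum_sum_type,
      p1, p2, p3, p4, q1, q2, q3, q4, mul_zero, sub_zero, zero_sub, add_zero, zero_add,
      Finset.sum_const_zero, sub_self, neg_zero, mul_zero, sub_zero]
  | inr i =>
    simp only [cBracket, liftGV, dual, Sum.elim_inl, Sum.elim_inr, Fintype.sum_sum_type,
      p1, p2, p3, p4, q1, q2, q3, q4, mul_zero, sub_zero, zero_sub, add_zero, zero_add,
      Finset.sum_const_zero, sub_self, neg_zero]
    rw [pd_sum_prod X Y ξ ζ hX' hY' hξ' hζ' i (z ∘ Sum.inl)]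
    simp only [Finset.mul_sum, ← Finset.sum_sub_distrib, ← Finset.sum_add_distrib]
    refine Finset.sum_congr rfl fun k _ => ?_
    ring
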